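/- Define L : [−π, π] → ℝ by L(φ) = ∫₀^{π/2} (max(cos(φ' − φ), 0))² · cos φ' dφ'. Then L admits the explicit expression: L(φ) = 0 if φ ∈ [−π, −π/2]; L(φ) = (2 cos φ + 2 cos φ sin φ)/3 if φ ∈ [−π/2, 0]; L(φ) = (1 + cos²φ + 2 cos φ sin φ)/3 if φ ∈ [0, π/2]; and L(φ) = (1 + cos²φ + 2 cos φ)/3 if φ ∈ [π/2, π]. Equivalently, the function λ(φ) = (3/8)·L(φ) satisfies 8λ(φ) = 0, 2cos φ + 2cos φ sin φ, 1 + cos²φ + 2cos φ sin φ, and 1 + cos²φ + 2cos φ on the respective intervals. -/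

import Mathlib

open Real

noncomputable def Fprim (φ x : ℝ) : ℝ :=
  Real.sin x / 2 + Real.sin (3*x - 2*φ) / 12 + Real.sin (x - 2*φ) / 4

lemma hasDeriv_Fprim (φ x : ℝ) :
    HasDerivAt (Fprim φ) ((Real.cos (x - φ))^2 * Real.cos x) x := by
  have h1 : HasDerivAt (fun x : ℝ => 3*x - 2*φ) 3 x := by
    simpa using ((hasDerivAt_id x).const_mul (3:ℝ)).sub_const (2*φ)
  have h2 : HasDerivAt (fun x : ℝ => x - 2*φ) 1 x :=
    (hasDerivAt_id x).sub_const (2*φ)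
  have d1 := (Real.hasDerivAt_sin x).div_const 2
  have d2 := ((Real.hasDerivAt_sin (3*x - 2*φ)).comp x h1).div_const 12
  have d3 := ((Real.hasDerivAt_sin (x - 2*φ)).comp x h2).div_const 4
  have h := (d1.add d2).add d3
  refine h.congr_deriv ?_
  symm
  rw [show 3*x - 2*φ = (x - φ) + (x - φ) + x by ring,
      show x - 2*φ = (x - φ) - φ by ring]
  simp only [Real.cos_add, Real.cos_sub, Real.sin_add, Real.sin_sub]
  have hx := Real.sin_sq_add_cos_sq x
  have hφ := Real.sin_sq_add_cos_sq φ
  linear_combination (Real.cos x * Real.sin φ^2/4 + 3*Real.cos x*Real.cos φ^2/4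
    + Real.sin x*Real.sin φ*Real.cos φ/2) * hx + (Real.cos x/2) * hφ

lemma ftc (φ a b : ℝ) :
    (∫ x in a..b, (Real.cos (x - φ))^2 * Real.cos x) = Fprim φ b - Fprim φ a := by
  apply intervalIntegral.integral_eq_sub_of_hasDerivAt
  · intro x _; exact hasDeriv_Fprim φ x
  · apply Continuous.intervalIntegrable; continuity

theorem stmt_4 (φ : ℝ) :
    (φ ∈ Set.Icc (-π) (-(π/2)) →
      (∫ x in (0:ℝ)..(π/2), (max (Real.cos (x - φ)) 0)^2 * Real.cos x) = 0) ∧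
    (φ ∈ Set.Icc (-(π/2)) 0 →
      (∫ x in (0:ℝ)..(π/2), (max (Real.cos (x - φ)) 0)^2 * Real.cos x)
        = (2 * Real.cos φ + 2 * Real.cos φ * Real.sin φ) / 3) ∧
    (φ ∈ Set.Icc 0 (π/2) →
      (∫ x in (0:ℝ)..(π/2), (max (Real.cos (x - φ)) 0)^2 * Real.cos x)
        = (1 + (Real.cos φ)^2 + 2 * Real.cos φ * Real.sin φ) / 3) ∧
    (φ ∈ Set.Icc (π/2) π →
      (∫ x in (0:ℝ)..(π/2), (max (Real.cos (x - φ)) 0)^2 * Real.cos x)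
        = (1 + (Real.cos φ)^2 + 2 * Real.cos φ) / 3) := by
  have hπ := Real.pi_pos
  refine ⟨?_, ?_, ?_, ?_⟩
  · rintro ⟨h1, h2⟩
    rw [intervalIntegral.integral_congr (g := fun _ => (0:ℝ))]
    · simp
    · intro x hx
      rw [Set.uIcc_of_le (by positivity)] at hx
      obtain ⟨hx1, hx2⟩ := hx
      have : Real.cos (x - φ) ≤ 0 := by
        apply Real.cos_nonpos_of_pi_div_two_le_of_le <;> linarith
      simp [max_eq_right this]
  · rintro ⟨h1, h2⟩
    have hc1 : (0:ℝ) ≤ π/2 + φ := by linarith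
    have hc2 : π/2 + φ ≤ π/2 := by linarith
    rw [← intervalIntegral.integral_add_adjacent_intervals
          (a := 0) (b := π/2 + φ) (c := π/2)
          (by apply Continuous.intervalIntegrable; continuity)
          (by apply Continuous.intervalIntegrable; continuity)]
    have e1 : (∫ x in (0:ℝ)..(π/2 + φ), (max (Real.cos (x - φ)) 0)^2 * Real.cos x)
        = ∫ x in (0:ℝ)..(π/2 + φ), (Real.cos (x - φ))^2 * Real.cos x := by
      apply intervalIntegral.integral_congr
      intro x hx
      rw [Set.uIcc_of_le hc1] at hx
      obtain ⟨hx1, hx2⟩ := hx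
      have : 0 ≤ Real.cos (x - φ) := by
        apply Real.cos_nonneg_of_mem_Icc; constructor <;> [linarith; linarith]
      simp [max_eq_left this]
    have e2 : (∫ x in (π/2 + φ)..(π/2), (max (Real.cos (x - φ)) 0)^2 * Real.cos x) = 0 := by
      rw [intervalIntegral.integral_congr (g := fun _ => (0:ℝ))]
      · simp
      · intro x hx
        rw [Set.uIcc_of_le hc2] at hx
        obtain ⟨hx1, hx2⟩ := hx
        have : Real.cos (x - φ) ≤ 0 := by
          apply Real.cos_nonpos_of_pi_div_two_le_of_le <;> linarith
        simp [max_eq_right this]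
    rw [e1, e2, ftc, add_zero]
    unfold Fprim
    rw [show 3*(π/2 + φ) - 2*φ = π + (π/2 + φ) by ring,
        show (π/2 + φ) - 2*φ = π/2 - φ by ring,
        show (3:ℝ)*0 - 2*φ = -(2*φ) by ring,
        show (0:ℝ) - 2*φ = -(2*φ) by ring]
    simp only [Real.sin_add, Real.sin_sub, Real.sin_neg, Real.sin_pi, Real.cos_pi,
          Real.sin_pi_div_two, Real.cos_pi_div_two, Real.sin_zero, Real.cos_zero,
          Real.cos_two_mul, Real.sin_two_mul]
    ring
  · rintro ⟨h1, h2⟩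
    have e1 : (∫ x in (0:ℝ)..(π/2), (max (Real.cos (x - φ)) 0)^2 * Real.cos x)
        = ∫ x in (0:ℝ)..(π/2), (Real.cos (x - φ))^2 * Real.cos x := by
      apply intervalIntegral.integral_congr
      intro x hx
      rw [Set.uIcc_of_le (by positivity)] at hx
      obtain ⟨hx1, hx2⟩ := hx
      have : 0 ≤ Real.cos (x - φ) := by
        apply Real.cos_nonneg_of_mem_Icc; constructor <;> [linarith; linarith]
      simp [max_eq_left this]
    rw [e1, ftc]
    unfold Fprim
    rw [show 3*(π/2) - 2*φ = π + (π/2 - 2*φ) by ring,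
        show (3:ℝ)*0 - 2*φ = -(2*φ) by ring,
        show (0:ℝ) - 2*φ = -(2*φ) by ring]
    simp only [Real.sin_add, Real.sin_sub, Real.sin_neg, Real.sin_pi, Real.cos_pi,
          Real.sin_pi_div_two, Real.cos_pi_div_two, Real.sin_zero, Real.cos_zero,
          Real.cos_two_mul, Real.sin_two_mul]
    ring
  · rintro ⟨h1, h2⟩
    have hc1 : (0:ℝ) ≤ φ - π/2 := by linarith
    have hc2 : φ - π/2 ≤ π/2 := by linarith
    rw [← intervalIntegral.integral_add_adjacent_intervals
          (a := 0) (b := φ - π/2) (c := π/2)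
          (by apply Continuous.intervalIntegrable; continuity)
          (by apply Continuous.intervalIntegrable; continuity)]
    have e1 : (∫ x in (0:ℝ)..(φ - π/2), (max (Real.cos (x - φ)) 0)^2 * Real.cos x) = 0 := by
      rw [intervalIntegral.integral_congr (g := fun _ => (0:ℝ))]
      · simp
      · intro x hx
        rw [Set.uIcc_of_le hc1] at hx
        obtain ⟨hx1, hx2⟩ := hx
        have : Real.cos (x - φ) ≤ 0 := by
          rw [show x - φ = -(φ - x) by ring, Real.cos_neg]
          apply Real.cos_nonpos_of_pi_div_two_le_of_le <;> linarith
        simp [max_eq_right this]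
    have e2 : (∫ x in (φ - π/2)..(π/2), (max (Real.cos (x - φ)) 0)^2 * Real.cos x)
        = ∫ x in (φ - π/2)..(π/2), (Real.cos (x - φ))^2 * Real.cos x := by
      apply intervalIntegral.integral_congr
      intro x hx
      rw [Set.uIcc_of_le hc2] at hx
      obtain ⟨hx1, hx2⟩ := hx
      have : 0 ≤ Real.cos (x - φ) := by
        apply Real.cos_nonneg_of_mem_Icc; constructor <;> [linarith; linarith]
      simp [max_eq_left this]
    rw [e1, e2, ftc, zero_add]
    unfold Fprim
    rw [show 3*(π/2) - 2*φ = π + (π/2 - 2*φ) by ring,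
        show 3*(φ - π/2) - 2*φ = (φ - π/2) - π by ring,
        show (φ - π/2) - 2*φ = -(φ + π/2) by ring]
    simp only [Real.sin_add, Real.sin_sub, Real.sin_neg, Real.sin_pi, Real.cos_pi,
          Real.sin_pi_div_two, Real.cos_pi_div_two, Real.sin_zero, Real.cos_zero,
          Real.cos_two_mul, Real.sin_two_mul]
    ring
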